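/- arXiv:2406.18052 — 7 statements merged into one kernel-verified Lean document; each statement's English description precedes it below -/
import Mathlib

section
/- Let n ≥ 1 and let Z_1, …, Z_n be exchangeable real random variables. For any α ∈ (0, 1], P(Z_n ≤ Z_{(⌈αn⌉, n)}) ≥ α, where Z_{(⌈αn⌉, n)} is the ⌈αn⌉-th smallest value among Z_1, …, Z_n. -/
open MeasureTheory Filter
open scoped ENNReal

/-- The `k`-th smallest value (1-indexed) among `v 0, …, v (n-1)`,
counted with multiplicity. -/
noncomputable def kthSmallest {n : ℕ} (v : Fin n → ℝ) (k : ℕ) : ℝ :=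
  if h : k - 1 < n then v (Tuple.sort v ⟨k - 1, h⟩) else 0

/-- Real random variables `Z 0, …, Z (m-1)` are exchangeable if for every
permutation `σ` of the indices, the permuted vector has the same joint law. -/
def Exchangeable {Ω : Type*} [MeasurableSpace Ω] (P : Measure Ω) {m : ℕ}
    (Z : Fin m → Ω → ℝ) : Prop :=
  ∀ σ : Equiv.Perm (Fin m),
    Measure.map (fun ω => fun i => Z (σ i) ω) P = Measure.map (fun ω => fun i => Z i ω) P

lemma card_filter_comp_perm {n : ℕ} (σ : Equiv.Perm (Fin n)) (p : Fin n → Prop)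
    [DecidablePred p] :
    (Finset.univ.filter fun i => p (σ i)).card = (Finset.univ.filter p).card := by
  rw [← Fintype.card_subtype, ← Fintype.card_subtype]
  exact Fintype.card_congr (σ.subtypeEquiv fun a => Iff.rfl)

lemma lemA {n : ℕ} (v : Fin n → ℝ) (k : ℕ) (hk1 : 1 ≤ k) (hkn : k ≤ n) (j : Fin n) :
    v j ≤ kthSmallest v k ↔ (Finset.univ.filter fun i => v i < v j).card < k := by
  have h : k - 1 < n := by omega
  set σ := Tuple.sort v with hσ
  have hmono : Monotone (v ∘ σ) := Tuple.monotone_sort v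
  have hcard : (Finset.univ.filter fun i => v i < v j).card
      = (Finset.univ.filter fun i => v (σ i) < v j).card :=
    (card_filter_comp_perm σ _).symm
  rw [kthSmallest, dif_pos h, hcard]
  constructor
  · intro hvj
    have hsub : (Finset.univ.filter fun i => v (σ i) < v j) ⊆ Finset.Iio ⟨k-1, h⟩ := by
      intro i hi
      simp only [Finset.mem_filter] at hi
      simp only [Finset.mem_Iio]
      by_contra hle
      push_neg at hle
      exact absurd (lt_of_lt_of_le hi.2 hvj) (not_lt.2 (hmono hle))
    calc (Finset.univ.filter fun i => v (σ i) < v j).card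
        ≤ (Finset.Iio (⟨k-1, h⟩ : Fin n)).card := Finset.card_le_card hsub
      _ = k - 1 := by simp
      _ < k := by omega
  · intro hcd
    by_contra hlt
    push_neg at hlt
    have hsub : Finset.Iic (⟨k-1, h⟩ : Fin n) ⊆
        (Finset.univ.filter fun i => v (σ i) < v j) := by
      intro i hi
      simp only [Finset.mem_Iic] at hi
      simp only [Finset.mem_filter, Finset.mem_univ, true_and]
      exact lt_of_le_of_lt (hmono hi) hlt
    have := Finset.card_le_card hsub
    simp at this
    omega

lemma lemC {n : ℕ} (v : Fin n → ℝ) (k : ℕ) (hk1 : 1 ≤ k) (hkn : k ≤ n) :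
    k ≤ (Finset.univ.filter fun j =>
      (Finset.univ.filter fun i => v i < v j).card < k).card := by
  have h : k - 1 < n := by omega
  set σ := Tuple.sort v with hσ
  have hmono : Monotone (v ∘ σ) := Tuple.monotone_sort v
  have hsub : (Finset.Iic (⟨k-1, h⟩ : Fin n)).image σ ⊆
      Finset.univ.filter fun j => (Finset.univ.filter fun i => v i < v j).card < k := by
    intro j hj
    simp only [Finset.mem_image, Finset.mem_Iic] at hj
    obtain ⟨i, hi, rfl⟩ := hj
    simp only [Finset.mem_filter, Finset.mem_univ, true_and]
    rw [← lemA v k hk1 hkn]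
    rw [kthSmallest, dif_pos h]
    exact hmono hi
  calc k = ((Finset.Iic (⟨k-1, h⟩ : Fin n)).image σ).card := by
        rw [Finset.card_image_of_injective _ σ.injective]; simp; omega
    _ ≤ _ := Finset.card_le_card hsub

lemma measurableSet_A {n : ℕ} (j : Fin n) (k : ℕ) :
    MeasurableSet {v : Fin n → ℝ | (Finset.univ.filter fun i => v i < v j).card < k} := by
  have hf : Measurable fun v : Fin n → ℝ =>
      (Finset.univ.filter fun i => v i < v j).card := by
    simp only [Finset.card_filter]
    apply Finset.measurable_sum
    intro i _
    exact Measurable.ite (measurableSet_lt (measurable_pi_apply i) (measurable_pi_apply j))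
      measurable_const measurable_const
  exact hf (MeasurableSet.of_discrete (s := {m : ℕ | m < k}))

theorem quantiles_exchangeability_lower
    {Ω : Type*} [MeasurableSpace Ω] (P : Measure Ω) [IsProbabilityMeasure P]
    (n : ℕ) (hn : 1 ≤ n) (Z : Fin n → Ω → ℝ) (hmeas : ∀ i, Measurable (Z i))
    (hexch : Exchangeable P Z) (α : ℝ) (hα : α ∈ Set.Ioc (0 : ℝ) 1) :
    α ≤ (P {ω | Z ⟨n - 1, by omega⟩ ω ≤
        kthSmallest (fun i => Z i ω) ⌈α * (n : ℝ)⌉₊}).toReal := by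
  obtain ⟨hα0, hα1⟩ := hα
  have hnpos : (0:ℝ) < n := by exact_mod_cast hn
  set k : ℕ := ⌈α * (n : ℝ)⌉₊ with hk
  have hk1 : 1 ≤ k := Nat.one_le_iff_ne_zero.2 (by
    have : 0 < k := Nat.ceil_pos.2 (by positivity)
    omega)
  have hkn : k ≤ n := Nat.ceil_le.2 (by nlinarith)
  set j₀ : Fin n := ⟨n - 1, by omega⟩ with hj₀
  set E : Fin n → Set Ω := fun j =>
    {ω | (Finset.univ.filter fun i => Z i ω < Z j ω).card < k} with hE
  have hvec : Measurable fun ω => fun i => Z i ω := measurable_pi_lambda _ hmeas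
  have hEmeas : ∀ j, MeasurableSet (E j) := fun j => hvec (measurableSet_A j k)
  -- exchangeability: all P (E j) equal
  have hEq : ∀ j, P (E j) = P (E j₀) := by
    intro j
    have hσvec : Measurable fun ω => fun i => Z (Equiv.swap j j₀ i) ω :=
      measurable_pi_lambda _ (fun i => hmeas _)
    have hmap := hexch (Equiv.swap j j₀)
    have h1 := congrArg (fun μ : Measure (Fin n → ℝ) =>
      μ {v : Fin n → ℝ | (Finset.univ.filter fun i => v i < v j₀).card < k}) hmap
    rw [Measure.map_apply hσvec (measurableSet_A j₀ k),
        Measure.map_apply hvec (measurableSet_A j₀ k)] at h1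
    have hset : (fun ω => fun i => Z (Equiv.swap j j₀ i) ω) ⁻¹'
        {v : Fin n → ℝ | (Finset.univ.filter fun i => v i < v j₀).card < k} = E j := by
      ext ω
      simp only [Set.mem_preimage, Set.mem_setOf_eq, hE]
      simp only [Equiv.swap_apply_right]
      rw [card_filter_comp_perm (Equiv.swap j j₀) (fun i => Z i ω < Z j ω)]
    rw [hset] at h1
    exact h1
  -- counting bound: k ≤ ∑ j, P (E j)
  have hsum : (k : ℝ≥0∞) ≤ ∑ j, P (E j) := by
    have hpt : ∀ ω, (k : ℝ≥0∞) ≤ ∑ j, (E j).indicator (fun _ => (1:ℝ≥0∞)) ω := by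
      intro ω
      have : ∑ j, (E j).indicator (fun _ => (1:ℝ≥0∞)) ω
          = ((Finset.univ.filter fun j =>
              (Finset.univ.filter fun i => Z i ω < Z j ω).card < k).card : ℝ≥0∞) := by
        simp only [Set.indicator_apply, hE, Set.mem_setOf_eq]
        rw [Finset.sum_boole]
      rw [this]
      exact_mod_cast Nat.cast_le.2 (lemC (fun i => Z i ω) k hk1 hkn)
    calc (k : ℝ≥0∞) = ∫⁻ _, (k : ℝ≥0∞) ∂P := by simp
      _ ≤ ∫⁻ ω, ∑ j, (E j).indicator (fun _ => (1:ℝ≥0∞)) ω ∂P := lintegral_mono hpt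
      _ = ∑ j, ∫⁻ ω, (E j).indicator (fun _ => (1:ℝ≥0∞)) ω ∂P :=
          lintegral_finset_sum _ (fun j _ => measurable_one.indicator (hEmeas j))
      _ = ∑ j, P (E j) := by
          refine Finset.sum_congr rfl fun j _ => ?_
          rw [lintegral_indicator (hEmeas j)]
          simp
  have hsum' : (k : ℝ≥0∞) ≤ (n : ℝ≥0∞) * P (E j₀) := by
    calc (k : ℝ≥0∞) ≤ ∑ j, P (E j) := hsum
      _ = ∑ _j : Fin n, P (E j₀) := Finset.sum_congr rfl fun j _ => hEq j
      _ = (n : ℝ≥0∞) * P (E j₀) := by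
          rw [Finset.sum_const, Finset.card_univ, Fintype.card_fin, nsmul_eq_mul]
  have hfin : P (E j₀) ≠ ⊤ := measure_ne_top _ _
  have hreal : (k : ℝ) ≤ (n : ℝ) * (P (E j₀)).toReal := by
    have := ENNReal.toReal_mono (by
      exact ENNReal.mul_ne_top (by simp) hfin) hsum'
    simpa [ENNReal.toReal_mul] using this
  have hαk : α * n ≤ (k : ℝ) := Nat.le_ceil _
  have hgoal : α ≤ (P (E j₀)).toReal := by nlinarith
  have hset : {ω | Z j₀ ω ≤ kthSmallest (fun i => Z i ω) k} = E j₀ :=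
    Set.ext fun ω => lemA (fun i => Z i ω) k hk1 hkn j₀
  calc α ≤ (P (E j₀)).toReal := hgoal
    _ = _ := by rw [← hset]
end

section
/- Let n ≥ 1 and let Z_1, …, Z_{n+1} be exchangeable real random variables. For any α ∈ (0, 1] with α ≤ n/(n+1), P(Z_{n+1} ≤ Z_{(⌈α(n+1)⌉, n)}) ≥ α, where Z_{(⌈α(n+1)⌉, n)} is the ⌈α(n+1)⌉-th smallest value among the first n variables Z_1, …, Z_n (inflation of quantiles, lower bound). -/
open MeasureTheory Filter Finset
open scoped ENNReal

noncomputable def countLE {m : ℕ} (v : Fin m → ℝ) (x : ℝ) : ℕ :=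
  (Finset.univ.filter fun i => v i ≤ x).card


/-- number of entries strictly less than `x` -/
noncomputable def countLT {m : ℕ} (v : Fin m → ℝ) (x : ℝ) : ℕ :=
  (Finset.univ.filter fun i => v i < x).card

lemma count_comp_le {m m' : ℕ} (p : ℝ → Prop) [DecidablePred p] (z : Fin m' → ℝ)
    (f : Fin m → Fin m') (hf : Function.Injective f) :
    (Finset.univ.filter fun i => p (z (f i))).card ≤
      (Finset.univ.filter fun a => p (z a)).card := by
  rw [← Finset.card_image_of_injective _ hf]
  apply Finset.card_le_card
  intro a ha
  simp only [Finset.mem_image, Finset.mem_filter, Finset.mem_univ, true_and] at *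
  obtain ⟨i, hi, rfl⟩ := ha
  exact hi

lemma count_comp_eq {m m' : ℕ} (p : ℝ → Prop) [DecidablePred p] (z : Fin m' → ℝ)
    (f g : Fin m → Fin m') (hf : Function.Injective f) (hg : Function.Injective g)
    (him : Finset.image f Finset.univ = Finset.image g Finset.univ) :
    (Finset.univ.filter fun i => p (z (f i))).card =
      (Finset.univ.filter fun i => p (z (g i))).card := by
  have key : ∀ (f : Fin m → Fin m'), Function.Injective f →
      (Finset.univ.filter fun i => p (z (f i))).card =
        ((Finset.univ.image f).filter fun a => p (z a)).card := by
    intro f hf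
    rw [Finset.filter_image, Finset.card_image_of_injective _ hf]
  rw [key f hf, key g hg, him]

lemma count_perm {m : ℕ} (p : ℝ → Prop) [DecidablePred p] (v : Fin m → ℝ)
    (e : Equiv.Perm (Fin m)) :
    (Finset.univ.filter fun i => p (v (e i))).card =
      (Finset.univ.filter fun i => p (v i)).card := by
  have := count_comp_eq p v e id e.injective Function.injective_id
    (by rw [Finset.image_univ_equiv, Finset.image_id])
  simpa using this

lemma sorted_char {m k : ℕ} (hk1 : 1 ≤ k) (hkm : k ≤ m) (w : Fin m → ℝ) (hw : Monotone w)
    (p : ℝ → Prop) [DecidablePred p] (hp : ∀ a b : ℝ, a ≤ b → p b → p a) :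
    p (w ⟨k - 1, by omega⟩) ↔ k ≤ (Finset.univ.filter fun i => p (w i)).card := by
  constructor
  · intro h
    have hsub : Finset.Iic (⟨k - 1, by omega⟩ : Fin m) ⊆
        Finset.univ.filter fun i => p (w i) := by
      intro q hq
      simp only [Finset.mem_Iic] at hq
      simp only [Finset.mem_filter, Finset.mem_univ, true_and]
      exact hp _ _ (hw hq) h
    have hc := Finset.card_le_card hsub
    rw [Fin.card_Iic] at hc
    simp only [Fin.val_mk] at hc
    omega
  · intro h
    by_contra hx
    have hsub : (Finset.univ.filter fun i => p (w i)) ⊆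
        Finset.Iio (⟨k - 1, by omega⟩ : Fin m) := by
      intro q hq
      simp only [Finset.mem_filter, Finset.mem_univ, true_and] at hq
      simp only [Finset.mem_Iio]
      by_contra hqk
      push_neg at hqk
      exact hx (hp _ _ (hw hqk) hq)
    have hc := Finset.card_le_card hsub
    rw [Fin.card_Iio] at hc
    simp only [Fin.val_mk] at hc
    omega

lemma kth_char {m k : ℕ} (hk1 : 1 ≤ k) (hkm : k ≤ m) (v : Fin m → ℝ)
    (p : ℝ → Prop) [DecidablePred p] (hp : ∀ a b : ℝ, a ≤ b → p b → p a) :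
    p (kthSmallest v k) ↔ k ≤ (Finset.univ.filter fun i => p (v i)).card := by
  have h : k - 1 < m := by omega
  rw [kthSmallest, dif_pos h]
  have hmono : Monotone (v ∘ Tuple.sort v) := Tuple.monotone_sort v
  have := sorted_char hk1 hkm (v ∘ Tuple.sort v) hmono p hp
  rw [← count_perm p v (Tuple.sort v)]
  exact this

lemma kthSmallest_le_iff {m k : ℕ} (hk1 : 1 ≤ k) (hkm : k ≤ m) (v : Fin m → ℝ) (x : ℝ) :
    kthSmallest v k ≤ x ↔ k ≤ countLE v x :=
  kth_char hk1 hkm v (· ≤ x) (fun _ _ hab hb => hab.trans hb)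

lemma kthSmallest_lt_iff {m k : ℕ} (hk1 : 1 ≤ k) (hkm : k ≤ m) (v : Fin m → ℝ) (x : ℝ) :
    kthSmallest v k < x ↔ k ≤ countLT v x :=
  kth_char hk1 hkm v (· < x) (fun _ _ hab hb => lt_of_le_of_lt hab hb)

lemma image_succAbove {m : ℕ} (p : Fin (m + 1)) :
    Finset.image p.succAbove Finset.univ = {p}ᶜ := by
  ext a
  simp [Fin.exists_succAbove_eq_iff]

/-- Key combinatorial lemma. -/
lemma card_lower (n k : ℕ) (hk1 : 1 ≤ k) (hkn : k ≤ n) (z : Fin (n + 1) → ℝ) :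
    k ≤ (Finset.univ.filter fun j : Fin (n + 1) =>
      countLT (fun i : Fin n => z (j.succAbove i)) (z j) < k).card := by
  have hkm : k ≤ n + 1 := by omega
  set q := kthSmallest z k with hq
  have h1 : k ≤ countLE z q := (kthSmallest_le_iff hk1 hkm z q).1 le_rfl
  refine le_trans h1 (Finset.card_le_card ?_)
  intro j hj
  simp only [countLE, Finset.mem_filter, Finset.mem_univ, true_and] at hj ⊢
  -- hj : z j ≤ q ; goal : countLT (d_j z) (z j) < k
  by_contra hcon
  push_neg at hcon
  -- hcon : k ≤ countLT (d_j z) (z j)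
  have h2 : countLT (fun i : Fin n => z (j.succAbove i)) (z j) ≤ countLT z (z j) :=
    count_comp_le (· < z j) z j.succAbove Fin.succAbove_right_injective
  have h3 : k ≤ countLT z (z j) := le_trans hcon h2
  have h4 : q < z j := (kthSmallest_lt_iff hk1 hkm z (z j)).2 h3
  exact absurd hj (not_le.2 h4)

theorem inflation_of_quantiles_lower
    {Ω : Type*} [MeasurableSpace Ω] (P : Measure Ω) [IsProbabilityMeasure P]
    (n : ℕ) (hn : 1 ≤ n) (Z : Fin (n + 1) → Ω → ℝ) (hmeas : ∀ i, Measurable (Z i))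
    (hexch : Exchangeable P Z) (α : ℝ) (hα : α ∈ Set.Ioc (0 : ℝ) 1)
    (hαn : α ≤ (n : ℝ) / (n + 1)) :
    α ≤ (P {ω | Z (Fin.last n) ω ≤
        kthSmallest (fun i : Fin n => Z i.castSucc ω) ⌈α * ((n : ℝ) + 1)⌉₊}).toReal := by
  obtain ⟨hα0, hα1⟩ := hα
  set k : ℕ := ⌈α * ((n : ℝ) + 1)⌉₊ with hkdef
  have hnpos : (0 : ℝ) < (n : ℝ) + 1 := by positivity
  have hk1 : 1 ≤ k := Nat.one_le_ceil_iff.2 (by positivity)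
  have hkn : k ≤ n := Nat.ceil_le.2 (by
    rw [le_div_iff₀ hnpos] at hαn
    exact hαn)
  have hkm : k ≤ n + 1 := by omega
  -- the events
  set A : Fin (n + 1) → Set Ω := fun j =>
    {ω | countLT (fun i : Fin n => Z (j.succAbove i) ω) (Z j ω) < k} with hAdef
  have hA : ∀ j, MeasurableSet (A j) := by
    intro j
    have : A j = {ω | (∑ i : Fin n,
        if Z (j.succAbove i) ω < Z j ω then 1 else 0) < k} := by
      simp only [hAdef, countLT, Finset.card_filter]
    rw [this]
    apply measurableSet_lt _ measurable_const
    apply Finset.measurable_sum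
    intro i _
    exact Measurable.ite (measurableSet_lt (hmeas _) (hmeas _)) measurable_const
      measurable_const
  -- the template set in the product space
  set S : Set (Fin (n + 1) → ℝ) := {g | countLT
      (fun i : Fin n => g ((Fin.last n).succAbove i)) (g (Fin.last n)) < k} with hSdef
  have hS : MeasurableSet S := by
    have : S = {g | (∑ i : Fin n,
        if g ((Fin.last n).succAbove i) < g (Fin.last n) then 1 else 0) < k} := by
      simp only [hSdef, countLT, Finset.card_filter]
    rw [this]
    apply measurableSet_lt _ measurable_const
    apply Finset.measurable_sum
    intro i _
    exact Measurable.ite (measurableSet_lt (measurable_pi_apply _) (measurable_pi_apply _))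
      measurable_const measurable_const
  have hZm : Measurable (fun ω => fun i => Z i ω) := measurable_pi_lambda _ hmeas
  -- all events have the same probability
  have hPA : ∀ j, P (A j) = P (A (Fin.last n)) := by
    intro j
    set σ : Equiv.Perm (Fin (n + 1)) := Equiv.swap j (Fin.last n) with hσdef
    have hZσm : Measurable (fun ω => fun i => Z (σ i) ω) :=
      measurable_pi_lambda _ (fun i => hmeas _)
    have h2 : P ((fun ω => fun i => Z (σ i) ω) ⁻¹' S) =
        P ((fun ω => fun i => Z i ω) ⁻¹' S) := by
      rw [← Measure.map_apply hZσm hS, ← Measure.map_apply hZm hS, hexch σ]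
    have e1 : (fun ω => fun i => Z i ω) ⁻¹' S = A (Fin.last n) := rfl
    have hσlast : σ (Fin.last n) = j := Equiv.swap_apply_right j (Fin.last n)
    have e2 : (fun ω => fun i => Z (σ i) ω) ⁻¹' S = A j := by
      ext ω
      simp only [hSdef, hAdef, Set.mem_preimage, Set.mem_setOf_eq, hσlast]
      have hcnt : countLT (fun i : Fin n => Z (σ ((Fin.last n).succAbove i)) ω) (Z j ω)
          = countLT (fun i : Fin n => Z (j.succAbove i) ω) (Z j ω) := by
        apply count_comp_eq (· < Z j ω) (fun a => Z a ω)
          (fun i => σ ((Fin.last n).succAbove i)) j.succAbove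
          (σ.injective.comp Fin.succAbove_right_injective)
          Fin.succAbove_right_injective
        rw [show (fun i : Fin n => σ ((Fin.last n).succAbove i))
            = σ ∘ (Fin.last n).succAbove from rfl]
        rw [← Finset.image_image, image_succAbove, image_succAbove]
        ext a
        simp only [Finset.mem_image, Finset.mem_compl, Finset.mem_singleton]
        constructor
        · rintro ⟨b, hb, rfl⟩ h
          exact hb (σ.injective (h.trans hσlast.symm))
        · intro ha
          refine ⟨σ.symm a, fun h => ha ?_, Equiv.apply_symm_apply σ a⟩
          rw [← Equiv.apply_symm_apply σ a, h, hσlast]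
      rw [hcnt]
    rw [e1, e2] at h2
    exact h2
  -- pointwise counting lower bound
  have hpt : ∀ ω, (k : ℝ≥0∞) ≤ ∑ j : Fin (n + 1),
      (A j).indicator (fun _ => (1 : ℝ≥0∞)) ω := by
    intro ω
    have hcl := card_lower n k hk1 hkn (fun a => Z a ω)
    have hfe : (Finset.univ.filter fun j : Fin (n + 1) => ω ∈ A j)
        = Finset.univ.filter fun j : Fin (n + 1) =>
            countLT (fun i : Fin n => Z (j.succAbove i) ω) (Z j ω) < k := by
      apply Finset.filter_congr
      intro j _
      simp [hAdef]
    have heq : ∑ j : Fin (n + 1), (A j).indicator (fun _ => (1 : ℝ≥0∞)) ω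
        = ((Finset.univ.filter fun j : Fin (n + 1) => ω ∈ A j).card : ℝ≥0∞) := by
      rw [Finset.card_filter]
      push_cast
      apply Finset.sum_congr rfl
      intro j _
      by_cases h : ω ∈ A j <;> simp [Set.indicator_apply, h]
    rw [heq, hfe]
    exact_mod_cast hcl
  -- integrate
  have key : (k : ℝ≥0∞) ≤ ((n : ℝ≥0∞) + 1) * P (A (Fin.last n)) := by
    calc (k : ℝ≥0∞) = ∫⁻ _, (k : ℝ≥0∞) ∂P := by simp
    _ ≤ ∫⁻ ω, ∑ j : Fin (n + 1), (A j).indicator (fun _ => (1 : ℝ≥0∞)) ω ∂P :=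
        lintegral_mono hpt
    _ = ∑ j : Fin (n + 1), ∫⁻ ω, (A j).indicator (fun _ => (1 : ℝ≥0∞)) ω ∂P :=
        lintegral_finset_sum _ (fun j _ => measurable_const.indicator (hA j))
    _ = ∑ j : Fin (n + 1), P (A j) := by
        refine Finset.sum_congr rfl fun j _ => ?_
        rw [show (fun _ : Ω => (1 : ℝ≥0∞)) = (1 : Ω → ℝ≥0∞) from rfl]
        exact lintegral_indicator_one (hA j)
    _ = ∑ _j : Fin (n + 1), P (A (Fin.last n)) := Finset.sum_congr rfl fun j _ => hPA j
    _ = ((n : ℝ≥0∞) + 1) * P (A (Fin.last n)) := by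
        rw [Finset.sum_const, Finset.card_univ, Fintype.card_fin, nsmul_eq_mul]
        push_cast
        ring
  -- identify the goal event with A (last n)
  have hgoal : {ω | Z (Fin.last n) ω ≤
      kthSmallest (fun i : Fin n => Z i.castSucc ω) k} = A (Fin.last n) := by
    ext ω
    simp only [hAdef, Set.mem_setOf_eq, ← Fin.succAbove_last]
    rw [← not_lt, kthSmallest_lt_iff hk1 hkn, not_le]
  rw [hgoal]
  -- final arithmetic
  set p : ℝ≥0∞ := P (A (Fin.last n)) with hpdef
  have hfin : p ≠ ⊤ := measure_ne_top P _
  have h3 : (k : ℝ) ≤ ((n : ℝ) + 1) * p.toReal := by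
    have h4 := ENNReal.toReal_mono (by finiteness) key
    rw [ENNReal.toReal_mul] at h4
    have h5 : ((n : ℝ≥0∞) + 1).toReal = (n : ℝ) + 1 := by
      rw [ENNReal.toReal_add (by finiteness) (by finiteness)]
      simp
    rw [h5] at h4
    simpa using h4
  have hk_ge : α * ((n : ℝ) + 1) ≤ (k : ℝ) := Nat.le_ceil _
  nlinarith [hnpos, h3, hk_ge]
end

section
/- Let n ≥ 1 and let Z_1, …, Z_{n+1} be exchangeable real random variables that are almost surely distinct. For any α ∈ (0, 1] with α ≤ n/(n+1), P(Z_{n+1} ≤ Z_{(⌈α(n+1)⌉, n)}) ≤ α + 1/(n+1), where Z_{(⌈α(n+1)⌉, n)} is the ⌈α(n+1)⌉-th smallest value among the first n variables Z_1, …, Z_n (inflation of quantiles, upper bound). -/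
open MeasureTheory Filter

section Helpers
open Finset
open scoped ENNReal

lemma card_lt' (m t : ℕ) (h : t ≤ m) :
    (Finset.univ.filter fun j : Fin m => (j : ℕ) < t).card = t := by
  have : (Finset.univ.filter fun j : Fin m => (j : ℕ) < t)
      = Finset.map (Fin.castLEEmb h) Finset.univ := by
    ext j
    simp only [mem_filter, mem_univ, true_and, Finset.mem_map]
    constructor
    · intro hj; exact ⟨⟨j, hj⟩, rfl⟩
    · rintro ⟨a, rfl⟩; simp
  rw [this, Finset.card_map, Finset.card_univ, Fintype.card_fin]

lemma card_perm' {m : ℕ} (σ : Equiv.Perm (Fin m)) (p : Fin m → Prop) [DecidablePred p] :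
    (Finset.univ.filter fun i => p (σ i)).card = (Finset.univ.filter p).card := by
  apply Finset.card_nbij (fun i => σ i)
  · intro i hi; simp only [mem_coe, mem_filter, mem_univ, true_and] at *; exact hi
  · intro a ha b hb hab; exact σ.injective hab
  · intro j hj; simp only [Set.mem_image, mem_coe, mem_filter, mem_univ, true_and] at *
    exact ⟨σ.symm j, by simpa using hj, by simp⟩

lemma le_sorted_iff' {n : ℕ} (v : Fin n → ℝ) (x : ℝ) (k' : ℕ) (h : k' < n) :
    x ≤ (v ∘ Tuple.sort v) ⟨k', h⟩ ↔
      (Finset.univ.filter fun i => v i < x).card ≤ k' := by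
  set w := v ∘ Tuple.sort v with hw
  have hmono : Monotone w := Tuple.monotone_sort v
  have hcard : (Finset.univ.filter fun i => v i < x).card
      = (Finset.univ.filter fun j => w j < x).card :=
    (card_perm' (Tuple.sort v) (fun i => v i < x)).symm
  rw [hcard]
  constructor
  · intro hx
    by_contra hc
    push_neg at hc
    have : ∃ j ∈ Finset.univ.filter (fun j => w j < x), k' ≤ (j : ℕ) := by
      by_contra hall
      push_neg at hall
      have hsub : Finset.univ.filter (fun j => w j < x)
          ⊆ Finset.univ.filter (fun j : Fin n => (j : ℕ) < k') := by
        intro j hj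
        simp only [mem_filter, mem_univ, true_and] at *
        exact hall j (by simp [hj])
      have := Finset.card_le_card hsub
      rw [card_lt' n k' h.le] at this
      omega
    obtain ⟨j, hj, hkj⟩ := this
    simp only [mem_filter, mem_univ, true_and] at hj
    have : w ⟨k', h⟩ ≤ w j := hmono (by simp only [Fin.le_def, Fin.val_mk]; exact hkj)
    linarith
  · intro hc
    by_contra hx
    push_neg at hx
    have hsub : Finset.univ.filter (fun j : Fin n => (j : ℕ) < k' + 1)
        ⊆ Finset.univ.filter (fun j => w j < x) := by
      intro j hj
      simp only [mem_filter, mem_univ, true_and] at *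
      have : w j ≤ w ⟨k', h⟩ := hmono (by simp only [Fin.le_def, Fin.val_mk]; omega)
      linarith
    have := Finset.card_le_card hsub
    rw [card_lt' n (k' + 1) h] at this
    omega

lemma card_rank_lt' {m : ℕ} (v : Fin m → ℝ) (hv : Function.Injective v) (t : ℕ) (ht : t ≤ m) :
    (Finset.univ.filter fun r : Fin m =>
      (Finset.univ.filter fun i => v i < v r).card < t).card = t := by
  set rank : Fin m → ℕ := fun r => (Finset.univ.filter fun i => v i < v r).card with hrank
  have hlt : ∀ r, rank r < m := by
    intro r
    have hsub : (Finset.univ.filter fun i => v i < v r) ⊆ Finset.univ.erase r := by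
      intro i hi
      simp only [mem_filter, mem_univ, true_and, mem_erase] at *
      exact ⟨fun h => by rw [h] at hi; exact lt_irrefl _ hi, trivial⟩
    calc rank r ≤ (Finset.univ.erase r).card := Finset.card_le_card hsub
      _ < Finset.univ.card := Finset.card_erase_lt_of_mem (mem_univ r)
      _ = m := by simp
  have hmono : ∀ r s, v r < v s → rank r < rank s := by
    intro r s hrs
    apply Finset.card_lt_card
    constructor
    · intro i hi
      simp only [mem_filter, mem_univ, true_and] at *
      linarith
    · intro hsub
      have : r ∈ Finset.univ.filter fun i => v i < v s := by
        simp only [mem_filter, mem_univ, true_and]; exact hrs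
      have := hsub this
      simp only [mem_filter, mem_univ, true_and] at this
      exact lt_irrefl _ this
  have hinj : Function.Injective (fun r => (⟨rank r, hlt r⟩ : Fin m)) := by
    intro r s hrs
    by_contra hne
    simp only [Fin.mk.injEq] at hrs
    rcases lt_trichotomy (v r) (v s) with h | h | h
    · exact absurd hrs (Nat.ne_of_lt (hmono r s h))
    · exact hne (hv h)
    · exact absurd hrs.symm (Nat.ne_of_lt (hmono s r h))
  let e : Equiv.Perm (Fin m) := Equiv.ofBijective _ (Finite.injective_iff_bijective.mp hinj)
  have : (Finset.univ.filter fun r : Fin m =>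
      (Finset.univ.filter fun i => v i < v r).card < t)
      = Finset.univ.filter fun r => ((e r : Fin m) : ℕ) < t := rfl
  rw [this, card_perm' e (fun j : Fin m => (j : ℕ) < t), card_lt' m t ht]

lemma card_filter_castSucc' {n : ℕ} (p : Fin (n + 1) → Prop) [DecidablePred p]
    (hp : ¬ p (Fin.last n)) :
    (Finset.univ.filter p).card = (Finset.univ.filter fun i : Fin n => p i.castSucc).card := by
  have huniv : (Finset.univ : Finset (Fin (n + 1)))
      = insert (Fin.last n) (Finset.Iio (Fin.last n)) := by
    ext j
    simp only [mem_univ, mem_insert, mem_Iio, true_iff]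
    rcases lt_or_eq_of_le (Fin.le_last j) with h | h
    · exact Or.inr h
    · exact Or.inl h
  rw [huniv, Finset.filter_insert, if_neg hp, Fin.Iio_last_eq_map, Finset.filter_map,
    Finset.card_map]
  rfl

end Helpers

open Finset in
open scoped ENNReal in
theorem inflation_of_quantiles_upper
    {Ω : Type*} [MeasurableSpace Ω] (P : Measure Ω) [IsProbabilityMeasure P]
    (n : ℕ) (hn : 1 ≤ n) (Z : Fin (n + 1) → Ω → ℝ) (hmeas : ∀ i, Measurable (Z i))
    (hexch : Exchangeable P Z)
    (hdist : ∀ i j, i ≠ j → P {ω | Z i ω = Z j ω} = 0)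
    (α : ℝ) (hα : α ∈ Set.Ioc (0 : ℝ) 1) (hαn : α ≤ (n : ℝ) / (n + 1)) :
    (P {ω | Z (Fin.last n) ω ≤
        kthSmallest (fun i : Fin n => Z i.castSucc ω) ⌈α * ((n : ℝ) + 1)⌉₊}).toReal ≤
      α + 1 / (n + 1) := by
  classical
  obtain ⟨hα0, hα1⟩ := hα
  set k : ℕ := ⌈α * ((n : ℝ) + 1)⌉₊ with hkdef
  have hnpos : (0 : ℝ) < (n : ℝ) + 1 := by positivity
  have hk1 : 1 ≤ k := Nat.one_le_ceil_iff.mpr (by positivity)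
  have hkn : k ≤ n := by
    rw [hkdef]
    apply Nat.ceil_le.mpr
    calc α * ((n : ℝ) + 1) ≤ ((n : ℝ) / (n + 1)) * ((n : ℝ) + 1) := by
          apply mul_le_mul_of_nonneg_right hαn (le_of_lt hnpos)
      _ = (n : ℝ) := by field_simp
  have hk'n : k - 1 < n := by omega
  -- the events
  set E : Fin (n + 1) → Set Ω := fun r =>
    {ω | (Finset.univ.filter fun i => Z i ω < Z r ω).card < k} with hE
  -- the target event equals E (last)
  have hEventEq : {ω | Z (Fin.last n) ω ≤
      kthSmallest (fun i : Fin n => Z i.castSucc ω) k} = E (Fin.last n) := by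
    ext ω
    simp only [Set.mem_setOf_eq, hE]
    rw [kthSmallest, dif_pos hk'n]
    have h2 := le_sorted_iff' (fun i : Fin n => Z i.castSucc ω) (Z (Fin.last n) ω) (k - 1) hk'n
    simp only [Function.comp_apply] at h2
    rw [h2, card_filter_castSucc' (fun i => Z i ω < Z (Fin.last n) ω) (lt_irrefl _)]
    omega
  -- measurability of events in path space
  set S : Fin (n + 1) → Set (Fin (n + 1) → ℝ) := fun r =>
    {v | (Finset.univ.filter fun i => v i < v r).card < k} with hSdef
  have hSmeas : ∀ r, MeasurableSet (S r) := by
    intro r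
    have hN : Measurable (fun v : Fin (n + 1) → ℝ =>
        (Finset.univ.filter fun i => v i < v r).card) := by
      have : (fun v : Fin (n + 1) → ℝ => (Finset.univ.filter fun i => v i < v r).card)
          = fun v => ∑ i, if v i < v r then 1 else 0 := by
        funext v; rw [Finset.card_filter]
      rw [this]
      exact Finset.measurable_sum _ fun i _ => Measurable.ite
        (measurableSet_lt (measurable_pi_apply i) (measurable_pi_apply r))
        measurable_const measurable_const
    have hpre : S r = (fun v : Fin (n + 1) → ℝ =>
        (Finset.univ.filter fun i => v i < v r).card) ⁻¹' (Set.Iio k) := rfl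
    rw [hpre]
    exact hN measurableSet_Iio
  have hZvec : Measurable (fun ω => fun i => Z i ω) :=
    measurable_pi_lambda _ hmeas
  have hEpre : ∀ r, E r = (fun ω => fun i => Z i ω) ⁻¹' (S r) := by
    intro r; rfl
  have hEmeas : ∀ r, MeasurableSet (E r) := fun r => by
    rw [hEpre r]; exact hZvec (hSmeas r)
  -- all events have the same probability
  have hEeq : ∀ r, P (E r) = P (E (Fin.last n)) := by
    intro r
    have hσ := hexch (Equiv.swap r (Fin.last n))
    have hmeasσ : Measurable (fun ω => fun i => Z (Equiv.swap r (Fin.last n) i) ω) :=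
      measurable_pi_lambda _ fun i => hmeas _
    have h1 := congrArg (fun μ => μ (S (Fin.last n))) hσ
    rw [Measure.map_apply hmeasσ (hSmeas (Fin.last n)),
        Measure.map_apply hZvec (hSmeas (Fin.last n))] at h1
    have hleft : (fun ω => fun i => Z (Equiv.swap r (Fin.last n) i) ω) ⁻¹' (S (Fin.last n))
        = E r := by
      ext ω
      simp only [Set.mem_preimage, hSdef, Set.mem_setOf_eq, hE, Equiv.swap_apply_right]
      rw [card_perm' (Equiv.swap r (Fin.last n)) (fun i => Z i ω < Z r ω)]
    rw [hleft] at h1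
    rw [h1, ← hEpre (Fin.last n)]
  -- almost surely injective
  have hD : ∀ᵐ ω ∂P, Function.Injective (fun i => Z i ω) := by
    rw [ae_iff]
    have hU : P (⋃ i, ⋃ j, {ω | i ≠ j ∧ Z i ω = Z j ω}) = 0 := by
      apply measure_iUnion_null; intro i
      apply measure_iUnion_null; intro j
      by_cases h : i = j
      · subst h; simp
      · exact measure_mono_null (fun ω hω => hω.2) (hdist i j h)
    refine measure_mono_null (fun ω hω => ?_) hU
    simp only [Set.mem_setOf_eq, Function.not_injective_iff] at hω
    obtain ⟨i, j, hij, hne⟩ := hω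
    exact Set.mem_iUnion.mpr ⟨i, Set.mem_iUnion.mpr ⟨j, ⟨hne, hij⟩⟩⟩
  -- sum of probabilities equals k
  have hsum : ∑ r : Fin (n + 1), P (E r) = (k : ℝ≥0∞) := by
    have h1 : ∀ r : Fin (n + 1),
        P (E r) = ∫⁻ ω, (E r).indicator (fun _ => (1 : ℝ≥0∞)) ω ∂P := by
      intro r
      rw [lintegral_indicator (hEmeas r)]
      simp
    calc ∑ r : Fin (n + 1), P (E r)
        = ∑ r : Fin (n + 1), ∫⁻ ω, (E r).indicator (fun _ => (1 : ℝ≥0∞)) ω ∂P := by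
          exact Finset.sum_congr rfl fun r _ => h1 r
      _ = ∫⁻ ω, ∑ r : Fin (n + 1), (E r).indicator (fun _ => (1 : ℝ≥0∞)) ω ∂P := by
          rw [lintegral_finset_sum]
          intro r _
          exact (measurable_const.indicator (hEmeas r))
      _ = ∫⁻ _, (k : ℝ≥0∞) ∂P := by
          apply lintegral_congr_ae
          filter_upwards [hD] with ω hω
          have : ∀ r : Fin (n + 1), (E r).indicator (fun _ => (1 : ℝ≥0∞)) ω
              = if ω ∈ E r then 1 else 0 := fun r => Set.indicator_apply _ _ _
          simp only [this]
          have hcards : (Finset.univ.filter fun r : Fin (n + 1) => ω ∈ E r).card = k := by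
            have : (Finset.univ.filter fun r : Fin (n + 1) => ω ∈ E r)
                = Finset.univ.filter fun r : Fin (n + 1) =>
                    (Finset.univ.filter fun i => Z i ω < Z r ω).card < k := by
              apply Finset.filter_congr; intro r _; simp [hE]
            rw [this]
            exact card_rank_lt' (fun i => Z i ω) hω k (by omega)
          calc ∑ r : Fin (n + 1), (if ω ∈ E r then (1 : ℝ≥0∞) else 0)
              = ((Finset.univ.filter fun r : Fin (n + 1) => ω ∈ E r).card : ℝ≥0∞) := by
                rw [Finset.card_filter, Nat.cast_sum]
                apply Finset.sum_congr rfl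
                intro r _
                split <;> simp
            _ = (k : ℝ≥0∞) := by rw [hcards]
      _ = (k : ℝ≥0∞) := by simp
  -- conclude value of P (E last)
  have hcount : ((n + 1 : ℕ) : ℝ≥0∞) * P (E (Fin.last n)) = (k : ℝ≥0∞) := by
    rw [← hsum]
    rw [Finset.sum_congr rfl fun r _ => hEeq r]
    simp [Finset.sum_const, Finset.card_univ, nsmul_eq_mul]
  have hval : P (E (Fin.last n)) = (k : ℝ≥0∞) / ((n + 1 : ℕ) : ℝ≥0∞) := by
    rw [ENNReal.eq_div_iff (by simp) (by simp)]
    exact hcount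
  have htoReal : (P (E (Fin.last n))).toReal = (k : ℝ) / ((n : ℝ) + 1) := by
    rw [hval, ENNReal.toReal_div]
    norm_num [ENNReal.toReal_add]
  rw [hEventEq, htoReal]
  -- final arithmetic
  have hceil : (k : ℝ) < α * ((n : ℝ) + 1) + 1 := by
    rw [hkdef]
    exact Nat.ceil_lt_add_one (by positivity)
  rw [div_le_iff₀ hnpos]
  have : (α + 1 / ((n : ℝ) + 1)) * ((n : ℝ) + 1) = α * ((n : ℝ) + 1) + 1 := by
    field_simp
  rw [this]
  linarith
end

section
/- Let n ≥ 1 and let Z_1, …, Z_n be exchangeable real random variables that are almost surely distinct. For any α ∈ (0, 1) with ⌊αn⌋ ≥ 1, P(Z_n > Z_{(⌊αn⌋, n)}) ≥ 1 − α, where Z_{(⌊αn⌋, n)} is the ⌊αn⌋-th smallest value among Z_1, …, Z_n. -/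
open MeasureTheory Filter

namespace FQEL

variable {n : ℕ}

/-- Number of entries strictly below `w i`. -/
noncomputable def rank (w : Fin n → ℝ) (i : Fin n) : ℕ :=
  (Finset.univ.filter fun j => w j < w i).card

lemma card_filter_perm (σ : Equiv.Perm (Fin n)) (p : Fin n → Prop) [DecidablePred p] :
    (Finset.univ.filter fun i => p (σ i)).card = (Finset.univ.filter p).card := by
  apply Finset.card_bij (fun i _ => σ i)
  · intro a ha; simp only [Finset.mem_filter, Finset.mem_univ, true_and] at ha ⊢; exact ha
  · intro a _ b _ h; exact σ.injective h
  · intro b hb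
    refine ⟨σ.symm b, ?_, by simp⟩
    simp only [Finset.mem_filter, Finset.mem_univ, true_and] at hb ⊢
    simpa using hb

lemma rank_comp_perm (w : Fin n → ℝ) (σ : Equiv.Perm (Fin n)) (i : Fin n) :
    rank (w ∘ σ) i = rank w (σ i) :=
  card_filter_perm σ (fun j => w j < w (σ i))

lemma strictMono_sort {w : Fin n → ℝ} (hw : Function.Injective w) :
    StrictMono (w ∘ Tuple.sort w) :=
  (Tuple.monotone_sort w).strictMono_of_injective (hw.comp (Tuple.sort w).injective)

lemma rank_sort {w : Fin n → ℝ} (hw : Function.Injective w) (m : Fin n) :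
    rank w (Tuple.sort w m) = m := by
  rw [← rank_comp_perm w (Tuple.sort w) m]
  unfold rank
  have h : (Finset.univ.filter fun j => (w ∘ Tuple.sort w) j < (w ∘ Tuple.sort w) m)
      = Finset.Iio m := by
    ext j
    simp only [Finset.mem_filter, Finset.mem_univ, true_and, Finset.mem_Iio]
    exact (strictMono_sort hw).lt_iff_lt (a := j) (b := m)
  rw [h, Fin.card_Iio]

lemma key_iff {w : Fin n → ℝ} (hw : Function.Injective w) {k : ℕ}
    (hk1 : 1 ≤ k) (hkn : k ≤ n) (i : Fin n) :
    kthSmallest w k < w i ↔ k ≤ rank w i := by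
  have hlt : k - 1 < n := by omega
  set σ := Tuple.sort w with hσ
  have hi : i = σ (σ.symm i) := (σ.apply_symm_apply i).symm
  rw [kthSmallest, dif_pos hlt, hi, ← hσ]
  rw [rank_sort hw (σ.symm i)]
  have := (strictMono_sort hw).lt_iff_lt (a := ⟨k - 1, hlt⟩) (b := σ.symm i)
  simp only [Function.comp_apply] at this
  rw [this, Fin.lt_def]
  simp only [Fin.val_mk]
  omega

lemma card_rank_ge {w : Fin n → ℝ} (hw : Function.Injective w) {k : ℕ} (hkn : k ≤ n) :
    (Finset.univ.filter fun i => k ≤ rank w i).card = n - k := by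
  rw [← card_filter_perm (Tuple.sort w) (fun i => k ≤ rank w i)]
  have h : (Finset.univ.filter fun m => k ≤ rank w (Tuple.sort w m))
      = Finset.univ.filter fun m : Fin n => k ≤ (m : ℕ) := by
    ext m; simp [rank_sort hw]
  rw [h]
  have h2 : (Finset.univ.filter fun m : Fin n => k ≤ (m : ℕ))
      = (Finset.univ.filter fun m : Fin n => (m : ℕ) < k)ᶜ := by
    ext m; simp [not_lt]
  rw [h2, Finset.card_compl]
  congr 1
  · simp
  · rcases eq_or_lt_of_le hkn with h | h
    · have : (Finset.univ.filter fun m : Fin n => (m : ℕ) < k) = Finset.univ := by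
        ext m
        simp only [Finset.mem_filter, Finset.mem_univ, true_and, iff_true]
        have := m.isLt; omega
      rw [this, Finset.card_univ, Fintype.card_fin, h]
    · have : (Finset.univ.filter fun m : Fin n => (m : ℕ) < k) = Finset.Iio ⟨k, h⟩ := by
        ext m; simp [Fin.lt_def]
      rw [this, Fin.card_Iio]

lemma rank_measurable (i : Fin n) : Measurable fun w : Fin n → ℝ => rank w i := by
  simp only [rank, Finset.card_filter]
  exact Finset.measurable_sum _ fun j _ =>
    Measurable.ite (measurableSet_lt (measurable_pi_apply j) (measurable_pi_apply i))
      measurable_const measurable_const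

end FQEL

theorem floor_quantiles_exchangeability_lower
    {Ω : Type*} [MeasurableSpace Ω] (P : Measure Ω) [IsProbabilityMeasure P]
    (n : ℕ) (hn : 1 ≤ n) (Z : Fin n → Ω → ℝ) (hmeas : ∀ i, Measurable (Z i))
    (hexch : Exchangeable P Z)
    (hdist : ∀ i j, i ≠ j → P {ω | Z i ω = Z j ω} = 0)
    (α : ℝ) (hα : α ∈ Set.Ioo (0 : ℝ) 1) (hfloor : 1 ≤ ⌊α * (n : ℝ)⌋₊) :
    1 - α ≤ (P {ω | kthSmallest (fun i => Z i ω) ⌊α * (n : ℝ)⌋₊ <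
        Z ⟨n - 1, by omega⟩ ω}).toReal := by
  classical
  obtain ⟨hα0, hα1⟩ := hα
  set k := ⌊α * (n : ℝ)⌋₊ with hkdef
  have hn0 : (0 : ℝ) < n := by exact_mod_cast hn
  have hkle : (k : ℝ) ≤ α * n := Nat.floor_le (by positivity)
  have hkn : k < n := by
    have : (k : ℝ) < n := lt_of_le_of_lt hkle (by nlinarith)
    exact_mod_cast this
  set last : Fin n := ⟨n - 1, by omega⟩ with hlast
  set Zvec : Ω → (Fin n → ℝ) := fun ω => fun i => Z i ω with hZvec
  have hZvecMeas : Measurable Zvec := measurable_pi_lambda _ hmeas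
  -- the events
  set T : Fin n → Set (Fin n → ℝ) := fun i => {w | k ≤ FQEL.rank w i} with hT
  have hTmeas : ∀ i, MeasurableSet (T i) := fun i =>
    (FQEL.rank_measurable i) (MeasurableSpace.measurableSet_top (s := {m : ℕ | k ≤ m}))
  set C : Fin n → Set Ω := fun i => Zvec ⁻¹' T i with hC
  have hCmeas : ∀ i, MeasurableSet (C i) := fun i => hZvecMeas (hTmeas i)
  -- almost sure injectivity
  have hD : ∀ᵐ ω ∂P, Function.Injective fun i => Z i ω := by
    have h2 : ∀ᵐ ω ∂P, ∀ i j : Fin n, i ≠ j → Z i ω ≠ Z j ω := by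
      rw [ae_all_iff]
      intro i
      rw [ae_all_iff]
      intro j
      by_cases hij : i = j
      · simp [hij]
      · have : ∀ᵐ ω ∂P, Z i ω ≠ Z j ω := by
          rw [ae_iff]
          simpa using hdist i j hij
        filter_upwards [this] with ω hω _
        exact hω
    filter_upwards [h2] with ω hω
    intro a b hab
    by_contra hne
    exact hω a b hne hab
  -- all events have equal probability
  have hmap : ∀ i, P (C i) = P (C last) := by
    intro i
    set τ := Equiv.swap i last with hτ
    have hTpre : ((fun w : Fin n → ℝ => w ∘ τ) ⁻¹' T last) = T i := by
      ext w
      simp only [hT, Set.mem_preimage, Set.mem_setOf_eq]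
      rw [FQEL.rank_comp_perm w τ last, hτ, Equiv.swap_apply_right]
    have hCeq : C i = (fun ω => fun l => Z (τ l) ω) ⁻¹' T last := by
      rw [hC]
      simp only [← hTpre, Set.preimage_preimage]
      rfl
    have hpermMeas : Measurable (fun ω => fun l => Z (τ l) ω) :=
      measurable_pi_lambda _ fun l => hmeas (τ l)
    calc P (C i) = Measure.map (fun ω => fun l => Z (τ l) ω) P (T last) := by
          rw [Measure.map_apply hpermMeas (hTmeas last), hCeq]
      _ = Measure.map Zvec P (T last) := by rw [hexch τ]
      _ = P (C last) := by rw [Measure.map_apply hZvecMeas (hTmeas last)]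
  -- counting
  have hcount : ∀ᵐ ω ∂P,
      ∑ i : Fin n, (C i).indicator (fun _ => (1 : ENNReal)) ω = ((n - k : ℕ) : ENNReal) := by
    filter_upwards [hD] with ω hω
    have hcard : ∑ i : Fin n, (C i).indicator (fun _ => (1 : ENNReal)) ω
        = ((Finset.univ.filter fun i => k ≤ FQEL.rank (fun l => Z l ω) i).card : ENNReal) := by
      rw [Finset.card_filter]
      push_cast
      have hmem : ∀ i : Fin n, ω ∈ C i ↔ k ≤ FQEL.rank (fun l => Z l ω) i := fun i => Iff.rfl
      refine Finset.sum_congr rfl fun i _ => ?_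
      by_cases h : k ≤ FQEL.rank (fun l => Z l ω) i
      · rw [if_pos h, Set.indicator_of_mem ((hmem i).2 h)]
      · rw [if_neg h, Set.indicator_of_notMem (fun hmm => h ((hmem i).1 hmm))]
    rw [hcard, FQEL.card_rank_ge hω hkn.le]
  have hsum : ∑ i : Fin n, P (C i) = ((n - k : ℕ) : ENNReal) := by
    have h1 : ∀ i : Fin n, P (C i) = ∫⁻ ω, (C i).indicator (fun _ => (1 : ENNReal)) ω ∂P :=
      fun i => (lintegral_indicator_one (hCmeas i)).symm
    calc ∑ i : Fin n, P (C i)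
        = ∑ i : Fin n, ∫⁻ ω, (C i).indicator (fun _ => (1 : ENNReal)) ω ∂P :=
          Finset.sum_congr rfl fun i _ => h1 i
      _ = ∫⁻ ω, ∑ i : Fin n, (C i).indicator (fun _ => (1 : ENNReal)) ω ∂P :=
          (lintegral_finset_sum _ fun i _ => measurable_one.indicator (hCmeas i)).symm
      _ = ∫⁻ _, ((n - k : ℕ) : ENNReal) ∂P := lintegral_congr_ae hcount
      _ = ((n - k : ℕ) : ENNReal) := by rw [lintegral_const, measure_univ, mul_one]
  have hnsum : (n : ENNReal) * P (C last) = ((n - k : ℕ) : ENNReal) := by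
    rw [← hsum, Finset.sum_congr rfl fun i _ => hmap i, Finset.sum_const,
      Finset.card_univ, Fintype.card_fin, nsmul_eq_mul]
  -- the target set equals C last up to null sets
  have hSC : {ω | kthSmallest (fun i => Z i ω) k < Z last ω} =ᵐ[P] C last := by
    filter_upwards [hD] with ω hω
    rw [eq_iff_iff]
    simp only [Set.mem_setOf_eq, hC, hT, Set.mem_preimage]
    exact FQEL.key_iff hω hfloor hkn.le last
  have hPS : P {ω | kthSmallest (fun i => Z i ω) k < Z last ω} = P (C last) :=
    measure_congr hSC
  rw [hPS]
  -- final arithmetic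
  have hfin : P (C last) ≠ ⊤ := measure_ne_top P _
  have htoReal : (n : ℝ) * (P (C last)).toReal = ((n - k : ℕ) : ℝ) := by
    have := congrArg ENNReal.toReal hnsum
    rwa [ENNReal.toReal_mul, ENNReal.toReal_natCast, ENNReal.toReal_natCast] at this
  have hcast : ((n - k : ℕ) : ℝ) = (n : ℝ) - (k : ℝ) := by
    rw [Nat.cast_sub hkn.le]
  rw [hcast] at htoReal
  nlinarith [htoReal, hkle]
end

section
/- Let n ≥ 1, let z_1, …, z_{n+1} be arbitrary real numbers, and let 1 ≤ k ≤ n. Then z_{n+1} > z_{(k, n)} if and only if z_{n+1} > z_{(k, n+1)}, where z_{(k, n)} is the k-th smallest value among z_1, …, z_n and z_{(k, n+1)} is the k-th smallest value among z_1, …, z_{n+1}. -/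
open MeasureTheory Filter

lemma count_perm_aux {n : ℕ} (v : Fin n → ℝ) (σ : Equiv.Perm (Fin n)) (c : ℝ) :
    (Finset.univ.filter (fun i => v (σ i) < c)).card
      = (Finset.univ.filter (fun i => v i < c)).card := by
  apply Finset.card_bij' (fun i _ => σ i) (fun i _ => σ.symm i) <;>
    simp [Finset.mem_filter]

lemma monotone_lt_iff_count {n : ℕ} {w : Fin n → ℝ} (hw : Monotone w) (j : Fin n) (c : ℝ) :
    w j < c ↔ (j : ℕ) < (Finset.univ.filter (fun i => w i < c)).card := by
  constructor
  · intro h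
    have hsub : Finset.Iic j ⊆ Finset.univ.filter (fun i => w i < c) := by
      intro i hi
      simp only [Finset.mem_Iic] at hi
      simp only [Finset.mem_filter, Finset.mem_univ, true_and]
      exact lt_of_le_of_lt (hw hi) h
    have := Finset.card_le_card hsub
    rw [Fin.card_Iic] at this
    omega
  · intro h
    by_contra hc
    push_neg at hc
    have hsub : Finset.univ.filter (fun i => w i < c) ⊆ Finset.Iio j := by
      intro i hi
      simp only [Finset.mem_filter, Finset.mem_univ, true_and] at hi
      simp only [Finset.mem_Iio]
      by_contra hji
      push_neg at hji
      exact absurd (lt_of_lt_of_le hi hc) (not_lt.mpr (hw hji))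
    have := Finset.card_le_card hsub
    rw [Fin.card_Iio] at this
    omega

lemma kthSmallest_lt_iff_s8 {n : ℕ} (v : Fin n → ℝ) (k : ℕ) (h : k - 1 < n) (c : ℝ) :
    kthSmallest v k < c ↔ k - 1 < (Finset.univ.filter (fun i => v i < c)).card := by
  rw [kthSmallest, dif_pos h]
  have := monotone_lt_iff_count (Tuple.monotone_sort v) ⟨k - 1, h⟩ c
  simp only [Function.comp] at this
  rw [this, count_perm_aux]

theorem exceed_order_stat_iff
    (n : ℕ) (hn : 1 ≤ n) (z : Fin (n + 1) → ℝ) (k : ℕ) (hk1 : 1 ≤ k) (hkn : k ≤ n) :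
    kthSmallest (fun i : Fin n => z i.castSucc) k < z (Fin.last n) ↔
      kthSmallest z k < z (Fin.last n) := by
  have hk : k - 1 < n := by omega
  have hk' : k - 1 < n + 1 := by omega
  rw [kthSmallest_lt_iff_s8 _ k hk, kthSmallest_lt_iff_s8 _ k hk']
  have hcount : (Finset.univ.filter (fun i : Fin (n+1) => z i < z (Fin.last n))).card
      = (Finset.univ.filter (fun i : Fin n => z i.castSucc < z (Fin.last n))).card := by
    rw [Finset.card_filter, Finset.card_filter, Fin.sum_univ_castSucc]
    simp
  rw [hcount]
end

section
/- CHCDS coverage upper bound. Let 𝒳 be a measurable space, α ∈ (0,1), and n ≥ 1 with 1 ≤ ⌊α(n+1)⌋ ≤ n. Let (X_1, Y_1), …, (X_{n+1}, Y_{n+1}) be exchangeable random pairs taking values in 𝒳 × ℝ, and let f̂ : ℝ × 𝒳 → ℝ and ĉ : 𝒳 → ℝ be fixed measurable functions. Define scores V_i = f̂(Y_i, X_i) − ĉ(X_i) for i = 1, …, n+1, and assume V_1, …, V_{n+1} are almost surely distinct. Let q̂ be the ⌊α(n+1)⌋-th smallest value among V_1, …, V_n, and define the prediction set Ĉ(x)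 = {y ∈ ℝ : f̂(y, x) > ĉ(x) + q̂}. Then P(Y_{n+1} ∈ Ĉ(X_{n+1})) ≤ 1 − α + 1/(n+1). -/
/-!
The prediction set covers `Y_{n+1}` exactly when `V_{n+1}` exceeds at least `k = ⌊α(n+1)⌋` of
`V_1, …, V_n`, i.e. when `V_{n+1}` has rank at least `k` among all `n + 1` scores. By
exchangeability every index has the same probability of this rank event, and since the scores are
almost surely distinct, exactly `n + 1 - k` indices have rank at least `k`. So the coverage
probability is `(n + 1 - k)/(n + 1)`, which is at most `1 - α + 1/(n + 1)` as `α(n + 1) < k + 1`.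
-/

open MeasureTheory Filter

open Finset

namespace Tuple

variable {α : Type*} [LinearOrder α] {m : ℕ}

def rank (v : Fin m → α) (j : Fin m) : ℕ := #{i | v i < v j}

theorem card_filter_comp_sort_lt (v : Fin m → α) (w : α) :
    #{i | v (sort v i) < w} = #{i | v i < w} :=
  card_equiv (sort v) (by simp)

theorem rank_comp_perm (v : Fin m → α) (σ : Equiv.Perm (Fin m)) (j : Fin m) :
    rank (v ∘ σ) j = rank v (σ j) :=
  card_equiv σ (by simp)

theorem rank_sort_apply {v : Fin m → α} (hv : Function.Injective v) (j : Fin m) :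
    rank v (sort v j) = j := by
  have hmono : StrictMono (v ∘ sort v) :=
    (monotone_sort v).strictMono_of_injective (hv.comp (sort v).injective)
  rw [← rank_comp_perm, rank]
  simp only [hmono.lt_iff_lt, filter_gt_eq_Iio, Fin.card_Iio]

theorem card_le_rank {v : Fin m → α} (hv : Function.Injective v) (k : ℕ) :
    #{j | k ≤ rank v j} = m - k := by
  calc #{j | k ≤ rank v j} = #{j : Fin m | ¬ (j : ℕ) < k} :=
        card_equiv (sort v).symm (by simp [← rank_sort_apply hv])
    _ = m - k := by
        rw [filter_not, card_sdiff_of_subset (filter_subset _ _), Fin.card_filter_val_lt]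
        simp only [card_univ, Fintype.card_fin]
        omega

theorem rank_last {n : ℕ} (v : Fin (n + 1) → α) :
    rank v (Fin.last n) = #{i : Fin n | v i.castSucc < v (Fin.last n)} := by
  rw [rank, card_filter, card_filter, Fin.sum_univ_castSucc]
  simp

end Tuple

theorem kthSmallest_lt_iff_s10 {n k : ℕ} (v : Fin n → ℝ) (hk : 1 ≤ k) (hkn : k ≤ n) (w : ℝ) :
    kthSmallest v k < w ↔ k ≤ #{i | v i < w} := by
  have hk' : k - 1 < n := by omega
  have hsorted := Tuple.lt_card_lt_iff_apply_lt_of_monotone (j := ⟨k - 1, hk'⟩) (a := w)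
    (Tuple.monotone_sort v)
  rw [kthSmallest, dif_pos hk', ← Tuple.card_filter_comp_sort_lt]
  exact hsorted.symm.trans (by simp only [Function.comp_apply]; omega)

section Exchangeable

variable {Ω ι β : Type*} [MeasurableSpace Ω] [MeasurableSpace β]

def IsExchangeable (P : Measure Ω) (Z : Ω → ι → β) : Prop :=
  ∀ σ : Equiv.Perm ι, P.map (fun ω i => Z ω (σ i)) = P.map Z

theorem IsExchangeable.comp {γ : Type*} [MeasurableSpace γ] {P : Measure Ω} {Z : Ω → ι → β}
    (hZ : IsExchangeable P Z) (hZm : Measurable Z) {g : β → γ} (hg : Measurable g) :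
    IsExchangeable P (fun ω i => g (Z ω i)) := by
  intro σ
  have hG : Measurable (fun z : ι → β => fun i => g (z i)) := by fun_prop
  have hZσ : Measurable (fun ω i => Z ω (σ i)) := by fun_prop
  have h := congrArg (Measure.map fun z : ι → β => fun i => g (z i)) (hZ σ)
  rwa [Measure.map_map hG hZσ, Measure.map_map hG hZm] at h

theorem IsExchangeable.measure_preimage_comp_perm {P : Measure Ω} {Z : Ω → ι → β}
    (hZ : IsExchangeable P Z) (hZm : Measurable Z) (σ : Equiv.Perm ι) {A : Set (ι → β)}
    (hA : MeasurableSet A) :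
    P {ω | (Z ω ∘ σ) ∈ A} = P (Z ⁻¹' A) := by
  have hZσ : Measurable (fun ω i => Z ω (σ i)) := by fun_prop
  rw [← Measure.map_apply hZm hA, ← hZ σ, Measure.map_apply hZσ hA]
  rfl

end Exchangeable

theorem ae_injective_of_pairwise_measure_eq_zero {Ω ι β : Type*} [MeasurableSpace Ω] [Countable ι]
    {P : Measure Ω} {V : ι → Ω → β}
    (hV : ∀ i j, i ≠ j → P {ω | V i ω = V j ω} = 0) :
    ∀ᵐ ω ∂P, Function.Injective (fun i => V i ω) := by
  have hne : ∀ᵐ ω ∂P, ∀ i j, i ≠ j → V i ω ≠ V j ω := by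
    simp only [ae_all_iff]
    intro i j
    by_cases hij : i = j
    · simp [hij]
    · simpa [hij] using measure_eq_zero_iff_ae_notMem.1 (hV i j hij)
  filter_upwards [hne] with ω hω i j hij
  by_contra h
  exact hω i j h hij

section Rank

open Tuple

variable {Ω : Type*} [MeasurableSpace Ω] {m : ℕ}

theorem measurable_rank (j : Fin m) : Measurable (fun v : Fin m → ℝ => rank v j) := by
  simp only [rank, card_filter]
  exact Finset.measurable_sum _ fun i _ =>
    Measurable.ite (measurableSet_lt (measurable_pi_apply i) (measurable_pi_apply j))
      measurable_const measurable_const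

theorem IsExchangeable.measure_le_rank_eq {P : Measure Ω} {V : Ω → Fin m → ℝ}
    (hV : IsExchangeable P V) (hVm : Measurable V) (k : ℕ) (j j' : Fin m) :
    P {ω | k ≤ rank (V ω) j} = P {ω | k ≤ rank (V ω) j'} := by
  have hA : MeasurableSet {v : Fin m → ℝ | k ≤ rank v j'} := measurable_rank j' measurableSet_Ici
  simpa [rank_comp_perm] using hV.measure_preimage_comp_perm hVm (Equiv.swap j j') hA

theorem IsExchangeable.measureReal_le_rank {P : Measure Ω} [IsProbabilityMeasure P]
    {V : Ω → Fin m → ℝ} (hV : IsExchangeable P V) (hVm : Measurable V)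
    (hinj : ∀ᵐ ω ∂P, Function.Injective (V ω)) (k : ℕ) (j : Fin m) :
    P.real {ω | k ≤ rank (V ω) j} = ((m - k : ℕ) : ℝ) / m := by
  have hmeas : ∀ j', MeasurableSet {ω | k ≤ rank (V ω) j'} := fun j' =>
    (measurable_rank j').comp hVm measurableSet_Ici
  have hsum : ∑ j', P.real {ω | k ≤ rank (V ω) j'} = (m - k : ℕ) := by
    calc ∑ j', P.real {ω | k ≤ rank (V ω) j'}
        = ∫ ω, ∑ j', {ω | k ≤ rank (V ω) j'}.indicator 1 ω ∂P := by
          rw [integral_finsetSum _ fun j' _ => (integrable_const 1).indicator (hmeas j')]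
          simp only [integral_indicator_one (hmeas _)]
      _ = ∫ _, ((m - k : ℕ) : ℝ) ∂P := by
          refine integral_congr_ae (hinj.mono fun ω hω => ?_)
          simp [Set.indicator_apply, ← card_le_rank hω k]
      _ = (m - k : ℕ) := by simp
  have hm : (0 : ℝ) < m := by exact_mod_cast j.pos
  rw [eq_div_iff hm.ne', ← hsum]
  simp [Measure.real, hV.measure_le_rank_eq hVm k _ j, mul_comm]

end Rank

theorem CHCDS_coverage_upper_general
    {𝒳 : Type*} [MeasurableSpace 𝒳] {Ω : Type*} [MeasurableSpace Ω]
    (P : Measure Ω) [IsProbabilityMeasure P]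
    (α : ℝ)
    (n : ℕ)
    (hfloor1 : 1 ≤ ⌊α * ((n : ℝ) + 1)⌋₊) (hfloorn : ⌊α * ((n : ℝ) + 1)⌋₊ ≤ n)
    (X : Fin (n + 1) → Ω → 𝒳) (Y : Fin (n + 1) → Ω → ℝ)
    (hX : ∀ i, Measurable (X i)) (hY : ∀ i, Measurable (Y i))
    (hexch : ∀ σ : Equiv.Perm (Fin (n + 1)),
      Measure.map (fun ω => fun i => (X (σ i) ω, Y (σ i) ω)) P =
        Measure.map (fun ω => fun i => (X i ω, Y i ω)) P)
    (fhat : ℝ × 𝒳 → ℝ) (chat : 𝒳 → ℝ)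
    (hfhat : Measurable fhat) (hchat : Measurable chat)
    (V : Fin (n + 1) → Ω → ℝ)
    (hV : ∀ i ω, V i ω = fhat (Y i ω, X i ω) - chat (X i ω))
    (hdist : ∀ i j, i ≠ j → P {ω | V i ω = V j ω} = 0)
    (qhat : Ω → ℝ)
    (hqhat : ∀ ω, qhat ω =
      kthSmallest (fun i : Fin n => V i.castSucc ω) ⌊α * ((n : ℝ) + 1)⌋₊) :
    (P {ω | chat (X (Fin.last n) ω) + qhat ω <
        fhat (Y (Fin.last n) ω, X (Fin.last n) ω)}).toReal ≤
      1 - α + 1 / (n + 1) := by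
  set k := ⌊α * ((n : ℝ) + 1)⌋₊
  have hZ : Measurable (fun ω i => (X i ω, Y i ω)) := by fun_prop
  have hscore : Measurable (fun p : 𝒳 × ℝ => fhat (p.2, p.1) - chat p.1) := by fun_prop
  have hVexch : IsExchangeable P (fun ω i => V i ω) := by
    simpa only [hV] using IsExchangeable.comp (Z := fun ω i => (X i ω, Y i ω)) hexch hZ hscore
  have hVm : Measurable (fun ω i => V i ω) := by
    simp only [hV]
    fun_prop
  have hcover : {ω | chat (X (Fin.last n) ω) + qhat ω < fhat (Y (Fin.last n) ω, X (Fin.last n) ω)}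
      = {ω | k ≤ Tuple.rank (fun i => V i ω) (Fin.last n)} := by
    ext ω
    rw [Set.mem_ofPred_eq, Set.mem_ofPred_eq, Tuple.rank_last, hqhat,
      ← kthSmallest_lt_iff_s10 _ hfloor1 hfloorn, hV (Fin.last n)]
    constructor <;> intro h <;> linarith
  rw [← measureReal_def, hcover,
    hVexch.measureReal_le_rank hVm (ae_injective_of_pairwise_measure_eq_zero hdist)]
  have hk : α * ((n : ℝ) + 1) < k + 1 := Nat.lt_floor_add_one _
  rw [Nat.cast_sub (by omega), div_le_iff₀ (by positivity)]
  push_cast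
  field_simp
  linarith

theorem CHCDS_coverage_upper
    {𝒳 : Type*} [MeasurableSpace 𝒳] {Ω : Type*} [MeasurableSpace Ω]
    (P : Measure Ω) [IsProbabilityMeasure P]
    (α : ℝ) (hα : α ∈ Set.Ioo (0 : ℝ) 1)
    (n : ℕ) (hn : 1 ≤ n)
    (hfloor1 : 1 ≤ ⌊α * ((n : ℝ) + 1)⌋₊) (hfloorn : ⌊α * ((n : ℝ) + 1)⌋₊ ≤ n)
    (X : Fin (n + 1) → Ω → 𝒳) (Y : Fin (n + 1) → Ω → ℝ)
    (hX : ∀ i, Measurable (X i)) (hY : ∀ i, Measurable (Y i))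
    (hexch : ∀ σ : Equiv.Perm (Fin (n + 1)),
      Measure.map (fun ω => fun i => (X (σ i) ω, Y (σ i) ω)) P =
        Measure.map (fun ω => fun i => (X i ω, Y i ω)) P)
    (fhat : ℝ × 𝒳 → ℝ) (chat : 𝒳 → ℝ)
    (hfhat : Measurable fhat) (hchat : Measurable chat)
    (V : Fin (n + 1) → Ω → ℝ)
    (hV : ∀ i ω, V i ω = fhat (Y i ω, X i ω) - chat (X i ω))
    (hdist : ∀ i j, i ≠ j → P {ω | V i ω = V j ω} = 0)
    (qhat : Ω → ℝ)
    (hqhat : ∀ ω, qhat ω =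
      kthSmallest (fun i : Fin n => V i.castSucc ω) ⌊α * ((n : ℝ) + 1)⌋₊) :
    (P {ω | chat (X (Fin.last n) ω) + qhat ω <
        fhat (Y (Fin.last n) ω, X (Fin.last n) ω)}).toReal ≤
      1 - α + 1 / (n + 1) :=
  CHCDS_coverage_upper_general P α n hfloor1 hfloorn X Y hX hY hexch fhat chat hfhat hchat V hV
    hdist qhat hqhat
end

section
/- Empirical averages with plug-in functions. Let S be a metric space equipped with its Borel σ-algebra and let Z_1, Z_2, … be i.i.d. S-valued random variables with common law P. Let M > 0, ε > 0, let g : ℝ → ℝ be a uniformly continuous function with |g| ≤ M, let R ⊆ S be measurable with P(Z_1 ∉ R) ≤ ε/M, and let h, h_1, h_2, … : S → ℝ be measurable functions with sup_{z ∈ R} |h_n(z) − h(z)| → 0 as n → ∞. Then almost surely limsup_{n → ∞} | n^{−1} Σ_{i=1}^n g(h_n(Z_i)) − E[g(h(Z_1))] | ≤ 2ε. -/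
open MeasureTheory ProbabilityTheory Filter Finset Topology

/-!
On `R` the plug-in error `|g (hₙ z) - g (h z)|` is eventually below any `δ` by uniform continuity
of `g`, and off `R` it is at most `2M`. Hence the plug-in average differs from the oracle average
`n⁻¹ ∑ g (h (Zᵢ))` by at most `δ + 2M` times the fraction of the `Zᵢ` outside `R`. The strong law
of large numbers, applied to `g ∘ h` and to the indicator of `Rᶜ`, sends these two averages to
`E g (h Z₀)` and to `P (Z₀ ∉ R) ≤ ε / M`, so the limsup is at most `2M · ε / M = 2ε`.
-/

theorem abs_inv_mul_sum_sub_inv_mul_sum_le {x y w : ℕ → ℝ} {δ : ℝ} {n : ℕ} (hn : 0 < n)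
    (hxy : ∀ i ∈ range n, |x i - y i| ≤ δ + w i) :
    |(n : ℝ)⁻¹ * ∑ i ∈ range n, x i - (n : ℝ)⁻¹ * ∑ i ∈ range n, y i| ≤
      δ + (n : ℝ)⁻¹ * ∑ i ∈ range n, w i := by
  have hn' : (0 : ℝ) < n := by exact_mod_cast hn
  rw [← mul_sub, ← sum_sub_distrib, abs_mul, abs_of_pos (inv_pos.2 hn')]
  calc (n : ℝ)⁻¹ * |∑ i ∈ range n, (x i - y i)|
      ≤ (n : ℝ)⁻¹ * ∑ i ∈ range n, (δ + w i) := by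
        gcongr
        exact (abs_sum_le_sum_abs _ _).trans (sum_le_sum hxy)
    _ = δ + (n : ℝ)⁻¹ * ∑ i ∈ range n, w i := by
        rw [sum_add_distrib, sum_const, card_range, nsmul_eq_mul, mul_add,
          inv_mul_cancel_left₀ hn'.ne']

theorem limsup_abs_inv_mul_sum_plugin_sub_le {S : Type*} {g : ℝ → ℝ} {M : ℝ}
    (hgUC : UniformContinuous g) (hgbd : ∀ t, |g t| ≤ M) {R : Set S} {h : S → ℝ}
    {hseq : ℕ → S → ℝ} (hconv : ∀ δ > (0 : ℝ), ∀ᶠ m in atTop, ∀ z ∈ R, |hseq m z - h z| ≤ δ)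
    {z : ℕ → S} {E p : ℝ}
    (hE : Tendsto (fun n : ℕ => (n : ℝ)⁻¹ * ∑ i ∈ range n, g (h (z i))) atTop (𝓝 E))
    (hp : Tendsto (fun n : ℕ => (n : ℝ)⁻¹ * ∑ i ∈ range n, Rᶜ.indicator 1 (z i)) atTop (𝓝 p)) :
    limsup (fun m : ℕ => |(m : ℝ)⁻¹ * ∑ i ∈ range m, g (hseq m (z i)) - E|) atTop ≤
      2 * M * p := by
  refine le_of_forall_pos_le_add fun δ hδ => ?_
  obtain ⟨η, hη, hg⟩ := Metric.uniformContinuous_iff.1 hgUC δ hδ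
  have hclose : ∀ᶠ m : ℕ in atTop, ∀ i,
      |g (hseq m (z i)) - g (h (z i))| ≤ δ + 2 * M * Rᶜ.indicator 1 (z i) := by
    filter_upwards [hconv (η / 2) (by positivity)] with m hm i
    by_cases hz : z i ∈ R
    · have hdist : dist (hseq m (z i)) (h (z i)) < η := by
        rw [Real.dist_eq]; linarith [hm _ hz]
      simpa [hz, Real.dist_eq] using (hg hdist).le
    · simp only [Set.indicator_of_mem (Set.mem_compl hz), Pi.one_apply, mul_one]
      linarith [abs_sub (g (hseq m (z i))) (g (h (z i))), hgbd (hseq m (z i)), hgbd (h (z i))]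
  set bound := fun m : ℕ => δ + 2 * M * ((m : ℝ)⁻¹ * ∑ i ∈ range m, Rᶜ.indicator 1 (z i)) +
    |(m : ℝ)⁻¹ * ∑ i ∈ range m, g (h (z i)) - E|
  have hle : ∀ᶠ m : ℕ in atTop,
      |(m : ℝ)⁻¹ * ∑ i ∈ range m, g (hseq m (z i)) - E| ≤ bound m := by
    filter_upwards [hclose, eventually_gt_atTop 0] with m hm hm0
    have havg := abs_inv_mul_sum_sub_inv_mul_sum_le hm0 fun i _ => hm i
    rw [← mul_sum, mul_left_comm] at havg
    exact (abs_sub_le _ _ _).trans (add_le_add_left havg _)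
  have hbound : Tendsto bound atTop (𝓝 (δ + 2 * M * p)) := by
    simpa using (tendsto_const_nhds.add (hp.const_mul (2 * M))).add (hE.sub_const E).abs
  calc limsup (fun m : ℕ => |(m : ℝ)⁻¹ * ∑ i ∈ range m, g (hseq m (z i)) - E|) atTop
      ≤ limsup bound atTop :=
        limsup_le_limsup hle (isCoboundedUnder_le_of_le atTop fun _ => abs_nonneg _)
          hbound.isBoundedUnder_le
    _ = 2 * M * p + δ := by rw [hbound.limsup_eq, add_comm]

section

variable {Ω S : Type*} [MeasurableSpace Ω] [MeasurableSpace S] {P : Measure Ω}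

theorem ae_tendsto_inv_mul_sum_comp {Z : ℕ → Ω → S} (hZmeas : ∀ i, Measurable (Z i))
    (hindep : iIndepFun Z P) (hident : ∀ i, Measure.map (Z i) P = Measure.map (Z 0) P)
    {φ : S → ℝ} (hφ : Measurable φ) (hint : Integrable (fun ω => φ (Z 0 ω)) P) :
    ∀ᵐ ω ∂P, Tendsto (fun n : ℕ => (n : ℝ)⁻¹ * ∑ i ∈ range n, φ (Z i ω)) atTop
      (𝓝 (∫ ω, φ (Z 0 ω) ∂P)) := by
  have hslln := strong_law_ae_real (fun i ω => φ (Z i ω)) hint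
    (fun i j hij => (hindep.comp (fun _ => φ) (fun _ => hφ)).indepFun hij)
    (fun i => (IdentDistrib.mk (hZmeas i).aemeasurable
      (hZmeas 0).aemeasurable (hident i)).comp hφ)
  simpa only [div_eq_inv_mul] using hslln

theorem integrable_comp_of_abs_le [IsFiniteMeasure P] {X : Ω → S} (hX : Measurable X)
    {φ : S → ℝ} (hφ : Measurable φ) {C : ℝ} (hφC : ∀ z, |φ z| ≤ C) :
    Integrable (fun ω => φ (X ω)) P :=
  .of_bound (hφ.comp hX).aestronglyMeasurable C (.of_forall fun ω => hφC (X ω))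

end

theorem empirical_averages_with_plugin_functions_general
    {Ω : Type*} [MeasurableSpace Ω] (P : Measure Ω) [IsProbabilityMeasure P]
    {S : Type*} [MeasurableSpace S]
    (Z : ℕ → Ω → S) (hZmeas : ∀ i, Measurable (Z i))
    (hindep : ProbabilityTheory.iIndepFun Z P)
    (hident : ∀ i, Measure.map (Z i) P = Measure.map (Z 0) P)
    (M ε : ℝ) (hM : 0 < M)
    (g : ℝ → ℝ) (hgUC : UniformContinuous g) (hgbd : ∀ t : ℝ, |g t| ≤ M)
    (R : Set S) (hRmeas : MeasurableSet R)
    (hPR : (P {ω | Z 0 ω ∉ R}).toReal ≤ ε / M)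
    (h : S → ℝ) (hhmeas : Measurable h)
    (hseq : ℕ → S → ℝ)
    (hconv : ∀ δ > (0 : ℝ), ∀ᶠ m in atTop, ∀ z ∈ R, |hseq m z - h z| ≤ δ) :
    ∀ᵐ ω ∂P, Filter.limsup (fun m : ℕ =>
        |(m : ℝ)⁻¹ * ∑ i ∈ Finset.range m, g (hseq m (Z i ω)) -
          ∫ ω', g (h (Z 0 ω')) ∂P|) atTop ≤ 2 * ε := by
  have hgh : Measurable fun z => g (h z) := hgUC.continuous.measurable.comp hhmeas
  have hχ : Measurable (Rᶜ.indicator (1 : S → ℝ)) := measurable_one.indicator hRmeas.compl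
  have hχbd : ∀ z, |Rᶜ.indicator (1 : S → ℝ) z| ≤ 1 := fun z => by
    by_cases hz : z ∈ R <;> simp [hz]
  have hpε : ∫ ω, Rᶜ.indicator 1 (Z 0 ω) ∂P ≤ ε / M := by
    rw [show (fun ω => Rᶜ.indicator (1 : S → ℝ) (Z 0 ω)) = (Z 0 ⁻¹' Rᶜ).indicator 1 from rfl,
      integral_indicator_one (hZmeas 0 hRmeas.compl)]
    exact hPR
  filter_upwards [ae_tendsto_inv_mul_sum_comp hZmeas hindep hident hgh
      (integrable_comp_of_abs_le (hZmeas 0) hgh fun z => hgbd (h z)),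
    ae_tendsto_inv_mul_sum_comp hZmeas hindep hident hχ
      (integrable_comp_of_abs_le (hZmeas 0) hχ hχbd)] with ω hE hp
  calc _ ≤ 2 * M * ∫ ω, Rᶜ.indicator 1 (Z 0 ω) ∂P :=
        limsup_abs_inv_mul_sum_plugin_sub_le hgUC hgbd hconv hE hp
    _ ≤ 2 * ε := by linarith [(le_div_iff₀' hM).1 hpε]

theorem empirical_averages_with_plugin_functions
    {Ω : Type*} [MeasurableSpace Ω] (P : Measure Ω) [IsProbabilityMeasure P]
    {S : Type*} [MetricSpace S] [MeasurableSpace S] [BorelSpace S]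
    (Z : ℕ → Ω → S) (hZmeas : ∀ i, Measurable (Z i))
    (hindep : ProbabilityTheory.iIndepFun Z P)
    (hident : ∀ i, Measure.map (Z i) P = Measure.map (Z 0) P)
    (M ε : ℝ) (hM : 0 < M) (hε : 0 < ε)
    (g : ℝ → ℝ) (hgUC : UniformContinuous g) (hgbd : ∀ t : ℝ, |g t| ≤ M)
    (R : Set S) (hRmeas : MeasurableSet R)
    (hPR : (P {ω | Z 0 ω ∉ R}).toReal ≤ ε / M)
    (h : S → ℝ) (hhmeas : Measurable h)
    (hseq : ℕ → S → ℝ) (hhseqmeas : ∀ m, Measurable (hseq m))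
    (hconv : ∀ δ > (0 : ℝ), ∀ᶠ m in atTop, ∀ z ∈ R, |hseq m z - h z| ≤ δ) :
    ∀ᵐ ω ∂P, Filter.limsup (fun m : ℕ =>
        |(m : ℝ)⁻¹ * ∑ i ∈ Finset.range m, g (hseq m (Z i ω)) -
          ∫ ω', g (h (Z 0 ω')) ∂P|) atTop ≤ 2 * ε :=
  empirical_averages_with_plugin_functions_general P Z hZmeas hindep hident M ε hM g hgUC hgbd R
    hRmeas hPR h hhmeas hseq hconv
end
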